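/- arXiv:2401.12569 — 3 statements merged into one kernel-verified Lean document; each statement's English description precedes it below -/
import Mathlib

section
/- Let γ∈ℝ∪{+∞}, ξ∈ℝ, and b≠0. Every eigenvalue ϑₙ±(γ,ξ) of the fiber operator 𝒟_{γ,ξ} is simple, i.e. dim ker(𝒟_{γ,ξ}−λ)≤1 for every λ∈ℝ. -/
open MeasureTheory Set Filter Topology

noncomputable section

/-- Lebesgue measure on the half-line `(0,∞)`. -/
def muHalf : Measure ℝ := volume.restrict (Ioi 0)

/-- The operator `d_ξ = ξ - d/dx + bx`. -/
def dOp (b ξ : ℝ) (u : ℝ → ℂ) : ℝ → ℂ :=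
  fun x => ((ξ : ℂ) + (b : ℂ) * (x : ℂ)) * u x - deriv u x

/-- The operator `d_ξ† = ξ + d/dx + bx`. -/
def dOpDag (b ξ : ℝ) (u : ℝ → ℂ) : ℝ → ℂ :=
  fun x => ((ξ : ℂ) + (b : ℂ) * (x : ℂ)) * u x + deriv u x

/-- Boundary condition: `u₂(0) = γ u₁(0)` for `γ ∈ ℝ` and `u₁(0) = 0` for `γ = +∞`
(encoded as `none`). -/
def fiberBC (γ : Option ℝ) (u₁ u₂ : ℝ → ℂ) : Prop :=
  match γ with
  | some g => u₂ 0 = (g : ℂ) * u₁ 0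
  | none => u₁ 0 = 0

/-- `(u₁,u₂)` solves the eigenvalue system of the fiber Dirac operator `𝒟_{γ,ξ}` -/
structure IsFiberEigenfun (b : ℝ) (γ : Option ℝ) (ξ lam : ℝ) (u₁ u₂ : ℝ → ℂ) : Prop where
  smooth₁ : ContDiff ℝ (⊤ : ℕ∞) u₁
  smooth₂ : ContDiff ℝ (⊤ : ℕ∞) u₂
  memL2₁ : MemLp u₁ 2 muHalf
  memL2₂ : MemLp u₂ 2 muHalf
  eq₁ : ∀ x ∈ Ici (0 : ℝ), dOpDag b ξ u₁ x = (lam : ℂ) * u₂ x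
  eq₂ : ∀ x ∈ Ici (0 : ℝ), dOp b ξ u₂ x = (lam : ℂ) * u₁ x
  bc : fiberBC γ u₁ u₂

def IsFiberEigenvalue (b : ℝ) (γ : Option ℝ) (ξ lam : ℝ) : Prop :=
  ∃ u₁ u₂ : ℝ → ℂ, IsFiberEigenfun b γ ξ lam u₁ u₂ ∧
    ¬ ∀ x ∈ Ici (0 : ℝ), u₁ x = 0 ∧ u₂ x = 0

/-- enumeration of dispersion values -/
def IsDispersionAt (b : ℝ) (γ : Option ℝ) (ξ : ℝ) (θp θm : ℕ → ℝ) : Prop :=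
  (∀ n, 1 ≤ n → 0 ≤ θp n) ∧ (∀ n, 1 ≤ n → 0 < θm n) ∧
  (∀ m n, 1 ≤ m → m < n → θp m < θp n ∧ θm m < θm n) ∧
  (∀ lam : ℝ, IsFiberEigenvalue b γ ξ lam ↔
    ((∃ n, 1 ≤ n ∧ lam = θp n) ∨ (∃ n, 1 ≤ n ∧ lam = - θm n)))

lemma fiber_key (b ξ lam : ℝ) (w₁ w₂ : ℝ → ℂ)
    (h₁ : Differentiable ℝ w₁) (h₂ : Differentiable ℝ w₂)
    (e₁ : ∀ x ∈ Ici (0:ℝ), deriv w₁ x = (lam:ℂ) * w₂ x - ((ξ:ℂ)+(b:ℂ)*x) * w₁ x)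
    (e₂ : ∀ x ∈ Ici (0:ℝ), deriv w₂ x = ((ξ:ℂ)+(b:ℂ)*x) * w₂ x - (lam:ℂ) * w₁ x)
    (h01 : w₁ 0 = 0) (h02 : w₂ 0 = 0) :
    ∀ x ∈ Ici (0:ℝ), w₁ x = 0 ∧ w₂ x = 0 := by
  intro T hT
  rw [mem_Ici] at hT
  set p : ℝ → ℂ := fun t => ((ξ:ℂ) + (b:ℂ) * ((min (max t 0) T : ℝ) : ℂ)) with hp
  set K : NNReal := ⟨|lam| + (|ξ| + |b| * T), by positivity⟩ with hK
  set vf : ℝ → ℂ × ℂ → ℂ × ℂ :=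
    fun t y => ((lam:ℂ) * y.2 - p t * y.1, p t * y.2 - (lam:ℂ) * y.1) with hvf
  have hPbound : ∀ t, ‖p t‖ ≤ |ξ| + |b| * T := by
    intro t
    have hm0 : (0:ℝ) ≤ min (max t 0) T := le_min (le_max_right _ _) hT
    have hmT : min (max t 0) T ≤ T := min_le_right _ _
    calc ‖p t‖ ≤ ‖(ξ:ℂ)‖ + ‖(b:ℂ) * ((min (max t 0) T : ℝ) : ℂ)‖ := norm_add_le _ _
      _ = |ξ| + |b| * |min (max t 0) T| := by
          rw [norm_mul]; simp [Complex.norm_real, Real.norm_eq_abs]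
      _ ≤ |ξ| + |b| * T := by
          have : |min (max t 0) T| ≤ T := by rw [abs_of_nonneg hm0]; exact hmT
          nlinarith [abs_nonneg b]
  have hLip : ∀ t, LipschitzWith K (vf t) := by
    intro t
    apply LipschitzWith.of_dist_le_mul
    intro y z
    have h1 : ‖y.1 - z.1‖ ≤ ‖y - z‖ := by
      simpa using norm_fst_le (y - z)
    have h2 : ‖y.2 - z.2‖ ≤ ‖y - z‖ := by
      simpa using norm_snd_le (y - z)
    have hd : (0:ℝ) ≤ ‖y - z‖ := norm_nonneg _
    have hP := hPbound t
    have hPn : (0:ℝ) ≤ ‖p t‖ := norm_nonneg _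
    rw [Prod.dist_eq]
    simp only [dist_eq_norm] at h1 h2 ⊢
    have hKc : (K : ℝ) = |lam| + (|ξ| + |b| * T) := rfl
    apply max_le
    · have : ((lam:ℂ) * y.2 - p t * y.1) - ((lam:ℂ) * z.2 - p t * z.1)
          = (lam:ℂ) * (y.2 - z.2) - p t * (y.1 - z.1) := by ring
      rw [this]
      calc ‖(lam:ℂ) * (y.2 - z.2) - p t * (y.1 - z.1)‖
          ≤ ‖(lam:ℂ) * (y.2 - z.2)‖ + ‖p t * (y.1 - z.1)‖ := norm_sub_le _ _
        _ = |lam| * ‖y.2 - z.2‖ + ‖p t‖ * ‖y.1 - z.1‖ := by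
            rw [norm_mul, norm_mul]; simp [Complex.norm_real, Real.norm_eq_abs]
        _ ≤ (K : ℝ) * ‖y - z‖ := by
            rw [hKc]
            nlinarith [abs_nonneg lam, norm_nonneg (y.2 - z.2), norm_nonneg (y.1 - z.1)]
    · have : (p t * y.2 - (lam:ℂ) * y.1) - (p t * z.2 - (lam:ℂ) * z.1)
          = p t * (y.2 - z.2) - (lam:ℂ) * (y.1 - z.1) := by ring
      rw [this]
      calc ‖p t * (y.2 - z.2) - (lam:ℂ) * (y.1 - z.1)‖
          ≤ ‖p t * (y.2 - z.2)‖ + ‖(lam:ℂ) * (y.1 - z.1)‖ := norm_sub_le _ _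
        _ = ‖p t‖ * ‖y.2 - z.2‖ + |lam| * ‖y.1 - z.1‖ := by
            rw [norm_mul, norm_mul]; simp [Complex.norm_real, Real.norm_eq_abs]
        _ ≤ (K : ℝ) * ‖y - z‖ := by
            rw [hKc]
            nlinarith [abs_nonneg lam, norm_nonneg (y.2 - z.2), norm_nonneg (y.1 - z.1)]
  set w : ℝ → ℂ × ℂ := fun t => (w₁ t, w₂ t) with hw
  have hwc : ContinuousOn w (Icc 0 T) :=
    ((h₁.continuous.prodMk h₂.continuous).continuousOn)
  have hw' : ∀ t ∈ Ico (0:ℝ) T, HasDerivWithinAt w (vf t (w t)) (Ici t) t := by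
    intro t ht
    have hmin : min (max t 0) T = t := by
      rw [max_eq_left ht.1, min_eq_left ht.2.le]
    have hD : HasDerivAt w (deriv w₁ t, deriv w₂ t) t :=
      HasDerivAt.prodMk ((h₁ t).hasDerivAt) ((h₂ t).hasDerivAt)
    have : (deriv w₁ t, deriv w₂ t) = vf t (w t) := by
      rw [hvf]
      simp only [hp, hmin, hw]
      exact Prod.ext (e₁ t ht.1) (e₂ t ht.1)
    rw [this] at hD
    exact hD.hasDerivWithinAt
  have hzero' : ∀ t ∈ Ico (0:ℝ) T,
      HasDerivWithinAt (fun _ : ℝ => ((0:ℂ), (0:ℂ))) (vf t ((0:ℂ), (0:ℂ))) (Ici t) t := by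
    intro t ht
    have : vf t ((0:ℂ), (0:ℂ)) = ((0:ℂ), (0:ℂ)) := by simp [hvf]
    rw [this]
    exact (hasDerivWithinAt_const _ _ _)
  have hinit : w 0 = (fun _ : ℝ => ((0:ℂ), (0:ℂ))) 0 := by
    simp [hw, h01, h02]
  have heq := ODE_solution_unique_of_mem_Icc_right
    (v := vf) (s := fun _ => (univ : Set (ℂ × ℂ))) (K := K)
    (fun t _ => (hLip t).lipschitzOnWith)
    hwc hw' (fun _ _ => mem_univ _)
    continuousOn_const hzero' (fun _ _ => mem_univ _) hinit
  have hTmem : T ∈ Icc (0:ℝ) T := ⟨hT, le_refl T⟩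
  have := heq hTmem
  simp only [hw, Prod.mk.injEq] at this
  exact this


lemma fiber_combo (b : ℝ) (γ : Option ℝ) (ξ lam : ℝ) (u₁ u₂ v₁ v₂ : ℝ → ℂ)
    (hu : IsFiberEigenfun b γ ξ lam u₁ u₂) (hv : IsFiberEigenfun b γ ξ lam v₁ v₂)
    (a c : ℂ) (h01 : a * u₁ 0 + c * v₁ 0 = 0) (h02 : a * u₂ 0 + c * v₂ 0 = 0) :
    ∀ x ∈ Ici (0:ℝ), a * u₁ x + c * v₁ x = 0 ∧ a * u₂ x + c * v₂ x = 0 := by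
  have du₁ : Differentiable ℝ u₁ := hu.smooth₁.differentiable (by simp)
  have du₂ : Differentiable ℝ u₂ := hu.smooth₂.differentiable (by simp)
  have dv₁ : Differentiable ℝ v₁ := hv.smooth₁.differentiable (by simp)
  have dv₂ : Differentiable ℝ v₂ := hv.smooth₂.differentiable (by simp)
  have := fiber_key b ξ lam (fun x => a * u₁ x + c * v₁ x) (fun x => a * u₂ x + c * v₂ x)
    ((du₁.const_mul a).add (dv₁.const_mul c))
    ((du₂.const_mul a).add (dv₂.const_mul c))
    (by
      intro x hx
      have h : HasDerivAt (fun x => a * u₁ x + c * v₁ x)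
          (a * deriv u₁ x + c * deriv v₁ x) x :=
        (((du₁ x).hasDerivAt).const_mul a).add (((dv₁ x).hasDerivAt).const_mul c)
      rw [h.deriv]
      have E1 := hu.eq₁ x hx
      have E2 := hv.eq₁ x hx
      simp only [dOpDag] at E1 E2
      linear_combination a * E1 + c * E2)
    (by
      intro x hx
      have h : HasDerivAt (fun x => a * u₂ x + c * v₂ x)
          (a * deriv u₂ x + c * deriv v₂ x) x :=
        (((du₂ x).hasDerivAt).const_mul a).add (((dv₂ x).hasDerivAt).const_mul c)
      rw [h.deriv]
      have E1 := hu.eq₂ x hx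
      have E2 := hv.eq₂ x hx
      simp only [dOp] at E1 E2
      linear_combination (-a) * E1 + (-c) * E2)
    h01 h02
  exact this

/-- Proposition 1.3 (i): for `b ≠ 0`, `γ ∈ ℝ ∪ {+∞}` and `ξ ∈ ℝ`, every
eigenvalue of the fiber operator `𝒟_{γ,ξ}` is simple, i.e. `dim ker (𝒟_{γ,ξ} - λ) ≤ 1`:
any two solutions of the eigenvalue problem are linearly dependent. -/
theorem simplicity_of_fiber_eigenvalues
    (b : ℝ) (hb : b ≠ 0) (γ : Option ℝ) (ξ lam : ℝ)
    (u₁ u₂ v₁ v₂ : ℝ → ℂ)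
    (hu : IsFiberEigenfun b γ ξ lam u₁ u₂)
    (hv : IsFiberEigenfun b γ ξ lam v₁ v₂) :
    ∃ a c : ℂ, ¬ (a = 0 ∧ c = 0) ∧
      ∀ x ∈ Ici (0 : ℝ), a * u₁ x + c * v₁ x = 0 ∧ a * u₂ x + c * v₂ x = 0 := by
  rcases γ with _ | g
  · -- γ = +∞ : u₁ 0 = 0 and v₁ 0 = 0
    have hbu : u₁ 0 = 0 := hu.bc
    have hbv : v₁ 0 = 0 := hv.bc
    by_cases h : v₂ 0 = 0
    · refine ⟨0, 1, by simp, ?_⟩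
      have := fiber_combo b none ξ lam u₁ u₂ v₁ v₂ hu hv 0 1
        (by simp [hbv]) (by simp [h])
      simpa using this
    · refine ⟨v₂ 0, -(u₂ 0), fun hc => h (by simpa using hc.1), ?_⟩
      exact fiber_combo b none ξ lam u₁ u₂ v₁ v₂ hu hv (v₂ 0) (-(u₂ 0))
        (by rw [hbu, hbv]; ring) (by ring)
  · -- γ = g : u₂ 0 = g * u₁ 0 and v₂ 0 = g * v₁ 0
    have hbu : u₂ 0 = (g : ℂ) * u₁ 0 := hu.bc
    have hbv : v₂ 0 = (g : ℂ) * v₁ 0 := hv.bc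
    by_cases h : v₁ 0 = 0
    · refine ⟨0, 1, by simp, ?_⟩
      have := fiber_combo b (some g) ξ lam u₁ u₂ v₁ v₂ hu hv 0 1
        (by simp [h]) (by simp [hbv, h])
      simpa using this
    · refine ⟨v₁ 0, -(u₁ 0), fun hc => h (by simpa using hc.1), ?_⟩
      exact fiber_combo b (some g) ξ lam u₁ u₂ v₁ v₂ hu hv (v₁ 0) (-(u₁ 0))
        (by ring) (by rw [hbu, hbv]; ring)

end
end

section
/- Let γ∈ℝ∪{+∞}, ξ∈ℝ, and b≠0. Then 0 belongs to the spectrum of the fiber operator 𝒟_{γ,ξ} if and only if γ=0 in the case b>0, or γ=+∞ in the case b<0. -/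
open MeasureTheory Set Filter Topology

noncomputable section

/-!  ### Auxiliary material -/

/-- Gaussian-type profile `exp(ax + cx²/2)` as a `ℂ`-valued function. -/
def Efun (a c : ℝ) (x : ℝ) : ℂ := ((Real.exp (a*x + c*x^2/2) : ℝ) : ℂ)

lemma Efun_hasDerivAt (a c x : ℝ) :
    HasDerivAt (Efun a c) (((a : ℂ) + (c : ℂ) * x) * Efun a c x) x := by
  have h1 : HasDerivAt (fun x : ℝ => a*x + c*x^2/2) (a + c*x) x := by
    have := ((hasDerivAt_id x).const_mul a).add
      (((hasDerivAt_pow 2 x).const_mul c).div_const 2)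
    refine this.congr_deriv ?_
    simp; ring
  have h2 := (h1.exp).ofReal_comp
  refine h2.congr_deriv ?_
  unfold Efun
  push_cast
  ring

lemma Efun_contDiff (a c : ℝ) : ContDiff ℝ (⊤ : ℕ∞) (Efun a c) := by
  unfold Efun
  apply Complex.ofRealCLM.contDiff.comp
  apply Real.contDiff_exp.comp
  exact (contDiff_const.mul contDiff_id).add
    ((contDiff_const.mul (contDiff_id.pow 2)).div_const 2)

lemma Efun_norm (a c x : ℝ) : ‖Efun a c x‖ = Real.exp (a*x + c*x^2/2) := by
  unfold Efun
  rw [Complex.norm_real, Real.norm_eq_abs, abs_of_pos (Real.exp_pos _)]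

lemma Efun_zero (a c : ℝ) : Efun a c 0 = 1 := by
  unfold Efun; norm_num

lemma Efun_mul_neg (a c x : ℝ) : Efun (-a) (-c) x * Efun a c x = 1 := by
  unfold Efun
  rw [← Complex.ofReal_mul, ← Real.exp_add]
  have : -a*x + -c*x^2/2 + (a*x + c*x^2/2) = 0 := by ring
  rw [this, Real.exp_zero, Complex.ofReal_one]

/-- Uniqueness for the first-order ODE `f' = (a + cx) f` on `[0,∞)`. -/
lemma ode_unique (a c : ℝ) (f : ℝ → ℂ)
    (hf : ∀ x ∈ Ici (0:ℝ), HasDerivAt f (((a : ℂ) + (c : ℂ) * x) * f x) x) :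
    ∀ x ∈ Ici (0:ℝ), f x = f 0 * Efun a c x := by
  intro x hx
  set φ : ℝ → ℂ := fun t => f t * Efun (-a) (-c) t with hφ
  have key : ∀ t ∈ Ici (0:ℝ), HasDerivAt φ 0 t := by
    intro t ht
    have h := (hf t ht).mul (Efun_hasDerivAt (-a) (-c) t)
    refine h.congr_deriv ?_
    push_cast
    ring
  have hc : ContinuousOn φ (Icc 0 x) := fun t ht =>
    (key t ht.1).continuousAt.continuousWithinAt
  have hconst := constant_of_has_deriv_right_zero hc
    (fun t ht => (key t ht.1).hasDerivWithinAt) x ⟨hx, le_refl x⟩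
  have h0 : φ 0 = f 0 := by simp [hφ, Efun_zero]
  calc f x = f x * (Efun (-a) (-c) x * Efun a c x) := by rw [Efun_mul_neg]; ring
    _ = φ x * Efun a c x := by rw [hφ]; ring
    _ = f 0 * Efun a c x := by rw [hconst, h0]

/-- For `c < 0` the profile `Efun a c` is square integrable on `(0,∞)`. -/
lemma Efun_memL2 (a c : ℝ) (hc : c < 0) : MemLp (Efun a c) 2 muHalf := by
  have hm : AEStronglyMeasurable (Efun a c) muHalf :=
    (Efun_contDiff a c).continuous.aestronglyMeasurable
  rw [memLp_two_iff_integrable_sq_norm hm]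
  have hg : Integrable (fun x : ℝ => Real.exp (-2*a^2/c) * Real.exp (-(-c/2) * x^2)) muHalf :=
    (((integrable_exp_neg_mul_sq (by linarith : (0:ℝ) < -c/2)).const_mul _).restrict)
  apply hg.mono' ((((Efun_contDiff a c).continuous.norm).pow 2).aestronglyMeasurable)
  filter_upwards with x
  simp only [Pi.pow_apply]
  rw [Efun_norm, Real.norm_eq_abs, abs_of_nonneg (by positivity)]
  rw [← Real.exp_nat_mul, ← Real.exp_add]
  apply Real.exp_le_exp.2
  push_cast
  have hsq : (2*a + c*x)^2 / (2*c) ≤ 0 :=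
    div_nonpos_of_nonneg_of_nonpos (sq_nonneg _) (by linarith)
  have key : 2*(a*x + c*x^2/2) = -2*a^2/c + -(-c/2)*x^2 + (2*a+c*x)^2/(2*c) := by
    have hc0 : c ≠ 0 := ne_of_lt hc
    field_simp
    ring
  linarith

/-- For `c > 0`, a multiple of `Efun a c` is square integrable on `(0,∞)` only if it vanishes. -/
lemma not_memL2 (a c : ℝ) (hc : 0 < c) (u : ℝ → ℂ) (C : ℂ)
    (hu : ∀ x ∈ Ici (0:ℝ), u x = C * Efun a c x) (hL : MemLp u 2 muHalf) : C = 0 := by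
  by_contra hC
  have hint : Integrable (fun x => ‖u x‖^2) muHalf :=
    (memLp_two_iff_integrable_sq_norm hL.1).1 hL
  set M : ℝ := max 0 (-2*a/c) with hM
  have hM0 : (0:ℝ) ≤ M := le_max_left _ _
  have hIoi : Ioi M ⊆ Ioi (0:ℝ) := fun t ht => lt_of_le_of_lt hM0 ht
  have hint2 : IntegrableOn (fun x => ‖u x‖^2) (Ioi M) volume := by
    have : IntegrableOn (fun x => ‖u x‖^2) (Ioi 0) volume := hint
    exact this.mono_set hIoi
  have hcst : Integrable (fun _ : ℝ => ‖C‖^2) (volume.restrict (Ioi M)) := by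
    apply hint2.mono' aestronglyMeasurable_const
    rw [ae_restrict_iff' measurableSet_Ioi]
    filter_upwards with x hxM
    have hx0 : (0:ℝ) ≤ x := le_of_lt (lt_of_le_of_lt hM0 hxM)
    rw [hu x hx0, Real.norm_eq_abs, abs_of_nonneg (by positivity), norm_mul, Efun_norm]
    have hax : -2*a/c ≤ x := le_trans (le_max_right _ _) (le_of_lt hxM)
    have h1 : -2*a ≤ c*x := by
      rw [div_le_iff₀ hc] at hax; linarith
    have h2 : (1:ℝ) ≤ Real.exp (a*x + c*x^2/2) := by
      rw [← Real.exp_zero]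
      apply Real.exp_le_exp.2
      nlinarith
    have h3 : 1 ≤ Real.exp (a*x + c*x^2/2) ^ 2 := by nlinarith
    nlinarith [sq_nonneg ‖C‖, mul_nonneg (sq_nonneg ‖C‖) (sub_nonneg.2 h3)]
  rw [integrable_const_iff] at hcst
  rcases hcst with h | h
  · exact hC (norm_eq_zero.1 (by
      nlinarith [sq_nonneg ‖C‖, norm_nonneg C,
        pow_eq_zero_iff (n := 2) (two_ne_zero) |>.1 h]))
  · rw [isFiniteMeasure_restrict, Real.volume_Ioi] at h
    exact h rfl

/-- Proposition 1.3 (iii): for `b ≠ 0`, `γ ∈ ℝ ∪ {+∞}`, `ξ ∈ ℝ`,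
`0` belongs to the spectrum of the fiber operator `𝒟_{γ,ξ}` (which has compact resolvent, so the
spectrum consists of eigenvalues) if and only if `γ = 0` in case `b > 0`, or `γ = +∞` in
case `b < 0`. -/
theorem zero_in_fiber_spectrum_iff
    (b : ℝ) (hb : b ≠ 0) (γ : Option ℝ) (ξ : ℝ) :
    IsFiberEigenvalue b γ ξ 0 ↔ ((0 < b ∧ γ = some 0) ∨ (b < 0 ∧ γ = none)) := by
  constructor
  · rintro ⟨u₁, u₂, hu, hnt⟩
    -- derive the explicit form of `u₁` and `u₂` on `[0,∞)`
    have hd1 : ∀ x ∈ Ici (0:ℝ),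
        HasDerivAt u₁ ((((-ξ : ℝ) : ℂ) + ((-b : ℝ) : ℂ) * x) * u₁ x) x := by
      intro x hx
      have hD := (hu.smooth₁.differentiable (by simp) x).hasDerivAt
      have he := hu.eq₁ x hx
      simp only [dOpDag, Complex.ofReal_zero, zero_mul] at he
      have : deriv u₁ x = (((-ξ : ℝ) : ℂ) + ((-b : ℝ) : ℂ) * x) * u₁ x := by
        push_cast
        linear_combination he
      rwa [this] at hD
    have hd2 : ∀ x ∈ Ici (0:ℝ),
        HasDerivAt u₂ (((ξ : ℂ) + (b : ℂ) * x) * u₂ x) x := by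
      intro x hx
      have hD := (hu.smooth₂.differentiable (by simp) x).hasDerivAt
      have he := hu.eq₂ x hx
      simp only [dOp, Complex.ofReal_zero, zero_mul] at he
      have : deriv u₂ x = ((ξ : ℂ) + (b : ℂ) * x) * u₂ x := by
        linear_combination -he
      rwa [this] at hD
    have hu1 : ∀ x ∈ Ici (0:ℝ), u₁ x = u₁ 0 * Efun (-ξ) (-b) x := ode_unique (-ξ) (-b) u₁ hd1
    have hu2 : ∀ x ∈ Ici (0:ℝ), u₂ x = u₂ 0 * Efun ξ b x := by
      apply ode_unique ξ b u₂
      intro x hx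
      exact hd2 x hx
    have hnz : u₁ 0 ≠ 0 ∨ u₂ 0 ≠ 0 := by
      by_contra h
      push_neg at h
      apply hnt
      intro x hx
      rw [hu1 x hx, hu2 x hx, h.1, h.2]
      simp
    rcases lt_or_gt_of_ne hb with hbneg | hbpos
    · -- b < 0 : u₁ must vanish
      have hC1 : u₁ 0 = 0 := not_memL2 (-ξ) (-b) (by linarith) u₁ (u₁ 0) hu1 hu.memL2₁
      have hC2 : u₂ 0 ≠ 0 := by
        rcases hnz with h | h
        · exact absurd hC1 h
        · exact h
      right
      refine ⟨hbneg, ?_⟩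
      cases γ with
      | none => rfl
      | some g =>
        exfalso
        have hbc := hu.bc
        simp only [fiberBC] at hbc
        rw [hC1, mul_zero] at hbc
        exact hC2 hbc
    · -- b > 0 : u₂ must vanish
      have hC2 : u₂ 0 = 0 := not_memL2 ξ b hbpos u₂ (u₂ 0) hu2 hu.memL2₂
      have hC1 : u₁ 0 ≠ 0 := by
        rcases hnz with h | h
        · exact h
        · exact absurd hC2 h
      left
      refine ⟨hbpos, ?_⟩
      cases γ with
      | none =>
        exfalso
        exact hC1 hu.bc
      | some g =>
        have hbc := hu.bc
        simp only [fiberBC] at hbc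
        rw [hC2] at hbc
        have : (g : ℂ) = 0 := by
          rcases mul_eq_zero.1 hbc.symm with h | h
          · exact h
          · exact absurd h hC1
        have : g = 0 := by exact_mod_cast this
        rw [this]
  · rintro (⟨hbpos, rfl⟩ | ⟨hbneg, rfl⟩)
    · -- b > 0, γ = 0 : take u₁ = Efun (-ξ) (-b), u₂ = 0
      refine ⟨Efun (-ξ) (-b), fun _ => 0, ⟨?_, contDiff_const, Efun_memL2 _ _ (by linarith),
        ?_, ?_, ?_, ?_⟩, ?_⟩
      · exact Efun_contDiff _ _
      · exact MemLp.zero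
      · intro x hx
        have hD := (Efun_hasDerivAt (-ξ) (-b) x).deriv
        simp only [dOpDag, hD]
        push_cast
        ring
      · intro x hx
        simp only [dOp, deriv_const']
        push_cast
        ring
      · show (0 : ℂ) = ((0:ℝ) : ℂ) * Efun (-ξ) (-b) 0
        simp
      · intro h
        have := (h 0 self_mem_Ici).1
        rw [Efun_zero] at this
        exact one_ne_zero this
    · -- b < 0, γ = ∞ : take u₁ = 0, u₂ = Efun ξ b
      refine ⟨fun _ => 0, Efun ξ b, ⟨contDiff_const, Efun_contDiff _ _, MemLp.zero,
        Efun_memL2 _ _ hbneg, ?_, ?_, rfl⟩, ?_⟩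
      · intro x hx
        simp only [dOpDag, deriv_const']
        push_cast
        ring
      · intro x hx
        have hD := (Efun_hasDerivAt ξ b x).deriv
        simp only [dOp, hD]
        push_cast
        ring
      · intro h
        have := (h 0 self_mem_Ici).2
        rw [Efun_zero] at this
        exact one_ne_zero this

end
end

section
/- Let (b,γ)∈ℝ², ξ∈ℝ, and let λ∈ℝ\{0} satisfy γλ>0. Then the map 𝒥: ker(𝔥⁺_{γλ,ξ}−λ²)∋u ↦ (u, λ⁻¹d_ξ†u) ∈ ker(𝒟_{γ,ξ}−λ) is well-defined and is an isomorphism of vector spaces. -/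
open MeasureTheory Set Filter Topology

noncomputable section

/-- `u` solves the eigenvalue problem of the Robin–Schrödinger operator
`𝔥⁺_{α,ξ} = d_ξ d_ξ†` with boundary condition `d_ξ† u(0) = α u(0)`
(the Friedrichs operator of `q⁺_{α,ξ}(u) = ‖d_ξ† u‖² + α u(0)²` on `B¹(ℝ₊)`). -/
structure IsRobinSolP (b ξ α ν : ℝ) (u : ℝ → ℂ) : Prop where
  smooth : ContDiff ℝ (⊤ : ℕ∞) u
  memL2 : MemLp u 2 muHalf
  eq : ∀ x ∈ Ici (0 : ℝ), dOp b ξ (dOpDag b ξ u) x = (ν : ℂ) * u x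
  bc : dOpDag b ξ u 0 = (α : ℂ) * u 0

/-- `u` solves the eigenvalue problem of the Robin–Schrödinger operator
`𝔥⁻_{α,ξ} = d_ξ† d_ξ` with boundary condition `d_ξ u(0) = -α u(0)`
(the Friedrichs operator of `q⁻_{α,ξ}(u) = ‖d_ξ u‖² + α u(0)²` on `B¹(ℝ₊)`). -/
structure IsRobinSolM (b ξ α ν : ℝ) (u : ℝ → ℂ) : Prop where
  smooth : ContDiff ℝ (⊤ : ℕ∞) u
  memL2 : MemLp u 2 muHalf
  eq : ∀ x ∈ Ici (0 : ℝ), dOpDag b ξ (dOp b ξ u) x = (ν : ℂ) * u x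
  bc : dOp b ξ u 0 = -(α : ℂ) * u 0

/-- `ν` is an eigenvalue of `𝔥⁺_{α,ξ}`. -/
def IsRobinEigenvalueP (b ξ α ν : ℝ) : Prop :=
  ∃ u : ℝ → ℂ, IsRobinSolP b ξ α ν u ∧ ¬ ∀ x ∈ Ici (0 : ℝ), u x = 0

/-- `ν` is an eigenvalue of `𝔥⁻_{α,ξ}`. -/
def IsRobinEigenvalueM (b ξ α ν : ℝ) : Prop :=
  ∃ u : ℝ → ℂ, IsRobinSolM b ξ α ν u ∧ ¬ ∀ x ∈ Ici (0 : ℝ), u x = 0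

/-- `ν` enumerates (increasingly, from index `1`) the simple eigenvalues
`0 ≤ ν₁⁺(α,ξ) < ν₂⁺(α,ξ) < …` of `𝔥⁺_{α,ξ}`. -/
def IsRobinSeqP (b ξ α : ℝ) (ν : ℕ → ℝ) : Prop :=
  (∀ n, 1 ≤ n → 0 ≤ ν n) ∧ (∀ m n, 1 ≤ m → m < n → ν m < ν n) ∧
  (∀ μ : ℝ, IsRobinEigenvalueP b ξ α μ ↔ ∃ n, 1 ≤ n ∧ μ = ν n)

/-- `ν` enumerates (increasingly, from index `1`) the simple eigenvalues
`0 ≤ ν₁⁻(α,ξ) < ν₂⁻(α,ξ) < …` of `𝔥⁻_{α,ξ}`. -/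
def IsRobinSeqM (b ξ α : ℝ) (ν : ℕ → ℝ) : Prop :=
  (∀ n, 1 ≤ n → 0 ≤ ν n) ∧ (∀ m n, 1 ≤ m → m < n → ν m < ν n) ∧
  (∀ μ : ℝ, IsRobinEigenvalueM b ξ α μ ↔ ∃ n, 1 ≤ n ∧ μ = ν n)

lemma norm_sq_eq_re_im (z : ℂ) : ‖z‖ ^ 2 = z.re ^ 2 + z.im ^ 2 := by
  rw [Complex.sq_norm, Complex.normSq_apply]; ring

lemma smooth_deriv {u : ℝ → ℂ} (hu : ContDiff ℝ (⊤ : ℕ∞) u) : ContDiff ℝ (⊤ : ℕ∞) (deriv u) :=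
  (contDiff_infty_iff_deriv.mp hu).2

lemma smooth_W (b ξ : ℝ) : ContDiff ℝ (⊤ : ℕ∞) (fun x : ℝ => ((ξ : ℂ) + (b : ℂ) * (x : ℂ))) :=
  contDiff_const.add (contDiff_const.mul Complex.ofRealCLM.contDiff)

lemma smooth_dOpDag {b ξ : ℝ} {u : ℝ → ℂ} (hu : ContDiff ℝ (⊤ : ℕ∞) u) :
    ContDiff ℝ (⊤ : ℕ∞) (dOpDag b ξ u) :=
  ((smooth_W b ξ).mul hu).add (smooth_deriv hu)

lemma key_memL2 (b ξ lam : ℝ) (u : ℝ → ℂ) (hsm : ContDiff ℝ (⊤ : ℕ∞) u) (hL2 : MemLp u 2 muHalf)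
    (heq : ∀ x ∈ Ici (0:ℝ), dOp b ξ (dOpDag b ξ u) x = ((lam ^ 2 : ℝ) : ℂ) * u x) :
    MemLp (dOpDag b ξ u) 2 muHalf := by
  set v := dOpDag b ξ u with hvdef
  have hvsm : ContDiff ℝ (⊤ : ℕ∞) v := smooth_dOpDag hsm
  have hvc : Continuous v := hvsm.continuous
  have huc : Continuous u := hsm.continuous
  have hu' : ∀ x, HasDerivAt u (deriv u x) x :=
    fun x => ((hsm.differentiable (by simp)) x).hasDerivAt
  have hv' : ∀ x, HasDerivAt v (deriv v x) x :=
    fun x => ((hvsm.differentiable (by simp)) x).hasDerivAt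
  have hud : ∀ x : ℝ, deriv u x = v x - ((ξ:ℂ) + (b:ℂ) * (x:ℂ)) * u x := by
    intro x; rw [hvdef]; simp [dOpDag]
  have hvd : ∀ x ∈ Ici (0:ℝ), deriv v x
      = ((ξ:ℂ) + (b:ℂ) * (x:ℂ)) * v x - ((lam:ℂ))^2 * u x := by
    intro x hx
    have h0 := heq x hx
    rw [dOp] at h0
    push_cast at h0 ⊢
    linear_combination -h0
  -- the two auxiliary real functions
  set g : ℝ → ℝ := fun x => (star (v x) * u x).re with hgdef
  set h : ℝ → ℝ := fun x => (star (u x) * u x).re with hhdef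
  have hh_eq : ∀ x, h x = ‖u x‖ ^ 2 := by
    intro x
    rw [hhdef]
    simp only [Complex.star_def, Complex.mul_re, Complex.conj_re, Complex.conj_im,
      norm_sq_eq_re_im]
    ring
  have hh_nonneg : ∀ x, 0 ≤ h x := fun x => (hh_eq x) ▸ sq_nonneg _
  have hgc : Continuous g :=
    Complex.continuous_re.comp ((continuous_star.comp hvc).mul huc)
  -- derivative of g on Ici 0
  have hg' : ∀ x ∈ Ici (0:ℝ),
      HasDerivAt g (‖v x‖ ^ 2 - lam ^ 2 * ‖u x‖ ^ 2) x := by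
    intro x hx
    have hc : HasDerivAt (fun y => star (v y) * u y)
        (star (deriv v x) * u x + star (v x) * deriv u x) x := (hv' x).star.mul (hu' x)
    have h2 : HasDerivAt g ((star (deriv v x) * u x + star (v x) * deriv u x).re) x :=
      Complex.reCLM.hasFDerivAt.comp_hasDerivAt x hc
    convert h2 using 1
    rw [hud x, hvd x hx, show ((lam:ℂ))^2 = ((lam^2:ℝ):ℂ) by push_cast; ring]
    simp only [Complex.star_def, Complex.mul_re, Complex.add_re, Complex.sub_re,
      Complex.mul_im, Complex.add_im, Complex.sub_im, Complex.conj_re, Complex.conj_im,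
      Complex.ofReal_re, Complex.ofReal_im, norm_sq_eq_re_im]
    ring
  -- derivative of h (everywhere)
  have hhd : ∀ x : ℝ, HasDerivAt h (2 * g x - 2 * (ξ + b * x) * h x) x := by
    intro x
    have hc : HasDerivAt (fun y => star (u y) * u y)
        (star (deriv u x) * u x + star (u x) * deriv u x) x := (hu' x).star.mul (hu' x)
    have h2 : HasDerivAt h ((star (deriv u x) * u x + star (u x) * deriv u x).re) x :=
      Complex.reCLM.hasFDerivAt.comp_hasDerivAt x hc
    convert h2 using 1
    rw [hud x, hgdef, hhdef]
    simp only [Complex.star_def, Complex.mul_re, Complex.add_re, Complex.sub_re,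
      Complex.mul_im, Complex.add_im, Complex.sub_im, Complex.conj_re, Complex.conj_im,
      Complex.ofReal_re, Complex.ofReal_im]
    ring
  -- derivative of H = h * exp Φ (everywhere)
  set Φ : ℝ → ℝ := fun x => 2 * ξ * x + b * x ^ 2 with hΦdef
  have hΦc : Continuous Φ := by fun_prop
  have hHd : ∀ x : ℝ, HasDerivAt (fun y => h y * Real.exp (Φ y))
      (2 * g x * Real.exp (Φ x)) x := by
    intro x
    have hφ : HasDerivAt Φ (2 * ξ + b * (2 * x)) x := by
      have h1 : HasDerivAt (fun y : ℝ => 2 * ξ * y) (2 * ξ) x := by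
        simpa using (hasDerivAt_id x).const_mul (2 * ξ)
      have h2 : HasDerivAt (fun y : ℝ => b * y ^ 2) (b * (2 * x)) x := by
        simpa using (hasDerivAt_pow 2 x).const_mul b
      exact h1.add h2
    have := (hhd x).mul hφ.exp
    exact this.congr_deriv (by ring)
  -- reduce to integrability of ‖v‖²
  rw [memLp_two_iff_integrable_sq_norm hvc.aestronglyMeasurable]
  by_contra hnot
  have hvc2 : Continuous fun x => ‖v x‖ ^ 2 := (hvc.norm).pow 2
  have huc2 : Continuous fun x => ‖u x‖ ^ 2 := (huc.norm).pow 2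
  have hInt_u : Integrable (fun x => ‖u x‖ ^ 2) muHalf :=
    (memLp_two_iff_integrable_sq_norm huc.aestronglyMeasurable).mp hL2
  set I := ∫ x in Ioi (0:ℝ), ‖u x‖ ^ 2 with hI
  set F : ℝ → ℝ := fun R => ∫ x in (0:ℝ)..R, ‖v x‖ ^ 2 with hF
  have hFadd : ∀ a c : ℝ, F a + ∫ x in a..c, ‖v x‖ ^ 2 = F c := by
    intro a c
    exact intervalIntegral.integral_add_adjacent_intervals
      (hvc2.intervalIntegrable _ _) (hvc2.intervalIntegrable _ _)
  have hFmono : Monotone F := by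
    intro a c hac
    have h1 := hFadd a c
    have h2 : 0 ≤ ∫ x in a..c, ‖v x‖ ^ 2 :=
      intervalIntegral.integral_nonneg hac (fun x _ => sq_nonneg _)
    linarith
  have hFunb : ∀ B : ℝ, ∃ R, B ≤ F R := by
    by_contra hB
    push_neg at hB
    obtain ⟨B, hB⟩ := hB
    apply hnot
    have hint : IntegrableOn (fun x => ‖v x‖ ^ 2) (Ioi (0:ℝ)) volume := by
      apply integrableOn_Ioi_of_intervalIntegral_norm_bounded B 0
        (b := fun n : ℕ => (n : ℝ)) (l := atTop) ?_ tendsto_natCast_atTop_atTop ?_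
      · intro n
        exact (hvc2.integrableOn_Icc).mono_set Ioc_subset_Icc_self
      · filter_upwards with n
        have heqn : ∫ x in (0:ℝ)..(n:ℝ), ‖(‖v x‖ ^ 2)‖ = F n := by
          apply intervalIntegral.integral_congr
          intro x _
          exact Real.norm_of_nonneg (sq_nonneg _)
        rw [heqn]
        exact (hB _).le
    exact hint
  have hFtop : Tendsto F atTop atTop := tendsto_atTop_atTop_of_monotone hFmono hFunb
  -- g grows
  have hgF : ∀ R : ℝ, 0 ≤ R → F R + (g 0 - lam ^ 2 * I) ≤ g R := by
    intro R hR
    have hintg : IntervalIntegrable (fun x => ‖v x‖ ^ 2 - lam ^ 2 * ‖u x‖ ^ 2) volume 0 R :=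
      ((hvc2.sub (continuous_const.mul huc2))).intervalIntegrable _ _
    have hftc : ∫ x in (0:ℝ)..R, (‖v x‖ ^ 2 - lam ^ 2 * ‖u x‖ ^ 2) = g R - g 0 := by
      apply intervalIntegral.integral_eq_sub_of_hasDerivAt ?_ hintg
      intro x hx
      rw [uIcc_of_le hR] at hx
      exact hg' x hx.1
    have hsplit : ∫ x in (0:ℝ)..R, (‖v x‖ ^ 2 - lam ^ 2 * ‖u x‖ ^ 2)
        = F R - lam ^ 2 * ∫ x in (0:ℝ)..R, ‖u x‖ ^ 2 := by
      rw [intervalIntegral.integral_sub (hvc2.intervalIntegrable _ _)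
        ((continuous_const.mul huc2).intervalIntegrable _ _) (g := fun x => lam ^ 2 * ‖u x‖ ^ 2),
        intervalIntegral.integral_const_mul]
    have hle : ∫ x in (0:ℝ)..R, ‖u x‖ ^ 2 ≤ I := by
      rw [intervalIntegral.integral_of_le hR]
      apply setIntegral_mono_set hInt_u
      · filter_upwards with x using sq_nonneg _
      · exact HasSubset.Subset.eventuallyLE Ioc_subset_Ioi_self
    have := mul_le_mul_of_nonneg_left hle (sq_nonneg lam)
    linarith
  have hgtop : Tendsto g atTop atTop := by
    apply tendsto_atTop_mono' atTop ?_
      (tendsto_atTop_add_const_right atTop (g 0 - lam ^ 2 * I) hFtop)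
    filter_upwards [eventually_ge_atTop (0:ℝ)] with R hR using hgF R hR
  obtain ⟨R₁, hR₁⟩ := (hgtop.eventually (eventually_ge_atTop (1:ℝ))).exists_forall_of_atTop
  set R₀ := max R₁ 0 with hR₀def
  have hR₀0 : 0 ≤ R₀ := le_max_right _ _
  have hgR₀ : ∀ R, R₀ ≤ R → 1 ≤ g R := fun R hR => hR₁ R ((le_max_left _ _).trans hR)
  -- pointwise lower bound
  set c₁ : ℝ := 1 + 2 * |ξ| + 2 * |b| with hc₁def
  have hc₁1 : 1 ≤ c₁ := by
    have : (0:ℝ) ≤ 2 * |ξ| + 2 * |b| := by positivity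
    rw [hc₁def]; linarith
  have key : ∀ R : ℝ, R₀ + 1 ≤ R → (2 / Real.exp 1 / c₁) * R⁻¹ ≤ h R := by
    intro R hR
    have hR1 : 1 ≤ R := by linarith
    set A : ℝ := 2 * |ξ| + 2 * |b| * R with hAdef
    have hA0 : 0 ≤ A := by positivity
    set δ : ℝ := 1 / (1 + A) with hδdef
    have hδpos : 0 < δ := by positivity
    have hδ1 : δ ≤ 1 := by
      rw [hδdef, div_le_one (by linarith)]; linarith
    have hδA : δ * A ≤ 1 := by
      rw [hδdef, div_mul_eq_mul_div, div_le_one (by linarith)]; linarith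
    have hsub : R₀ ≤ R - δ := by linarith
    have hgec : Continuous fun x => 2 * g x * Real.exp (Φ x) :=
      (continuous_const.mul hgc).mul (Real.continuous_exp.comp hΦc)
    have hftcH : ∫ x in R₀..R, 2 * g x * Real.exp (Φ x)
        = h R * Real.exp (Φ R) - h R₀ * Real.exp (Φ R₀) := by
      apply intervalIntegral.integral_eq_sub_of_hasDerivAt (fun x _ => hHd x)
        (hgec.intervalIntegrable _ _)
    have haddH : ∫ x in R₀..R, 2 * g x * Real.exp (Φ x)
        = (∫ x in R₀..(R - δ), 2 * g x * Real.exp (Φ x))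
          + ∫ x in (R - δ)..R, 2 * g x * Real.exp (Φ x) :=
      (intervalIntegral.integral_add_adjacent_intervals
        (hgec.intervalIntegrable _ _) (hgec.intervalIntegrable _ _)).symm
    have h1 : 0 ≤ ∫ x in R₀..(R - δ), 2 * g x * Real.exp (Φ x) := by
      apply intervalIntegral.integral_nonneg hsub
      intro x hx
      have := hgR₀ x hx.1
      positivity
    have h2 : δ * (2 * Real.exp (Φ R - 1)) ≤ ∫ x in (R - δ)..R, 2 * g x * Real.exp (Φ x) := by
      have hconst : ∫ x in (R - δ)..R, (2 * Real.exp (Φ R - 1))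
          = δ * (2 * Real.exp (Φ R - 1)) := by
        rw [intervalIntegral.integral_const, smul_eq_mul]
        ring_nf
      rw [← hconst]
      apply intervalIntegral.integral_mono_on (by linarith)
        (intervalIntegrable_const) (hgec.intervalIntegrable _ _)
      intro x hx
      obtain ⟨hx1, hx2⟩ := hx
      have hxR₀ : R₀ ≤ x := by linarith
      have hgx : 1 ≤ g x := hgR₀ x hxR₀
      have hx0 : 0 ≤ x := by linarith
      -- Φ R - Φ x ≤ 1
      have hb1 : 2 * ξ + b * (R + x) ≤ A := by
        have e1 : 2 * ξ ≤ 2 * |ξ| := by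
          have := le_abs_self ξ; linarith
        have e2 : b * (R + x) ≤ |b| * (R + x) := by
          apply mul_le_mul_of_nonneg_right (le_abs_self b) (by linarith)
        have e3 : |b| * (R + x) ≤ |b| * (2 * R) := by
          apply mul_le_mul_of_nonneg_left (by linarith) (abs_nonneg b)
        rw [hAdef]; linarith
      have hΦbound : Φ R - Φ x ≤ 1 := by
        have hfac : Φ R - Φ x = (R - x) * (2 * ξ + b * (R + x)) := by
          rw [hΦdef]; ring
        have e4 : (R - x) * (2 * ξ + b * (R + x)) ≤ (R - x) * A :=
          mul_le_mul_of_nonneg_left hb1 (by linarith)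
        have e5 : (R - x) * A ≤ δ * A :=
          mul_le_mul_of_nonneg_right (by linarith) hA0
        linarith
      have hexp : Real.exp (Φ R - 1) ≤ Real.exp (Φ x) :=
        Real.exp_le_exp.mpr (by linarith)
      nlinarith [Real.exp_pos (Φ x), Real.exp_pos (Φ R - 1)]
    have hHR₀ : 0 ≤ h R₀ * Real.exp (Φ R₀) := mul_nonneg (hh_nonneg _) (Real.exp_pos _).le
    -- h R ≥ 2 δ / e
    have hhR : 2 * δ / Real.exp 1 ≤ h R := by
      have hmain : δ * (2 * Real.exp (Φ R - 1)) ≤ h R * Real.exp (Φ R) := by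
        rw [haddH] at hftcH; linarith
      rw [Real.exp_sub] at hmain
      have hepos := Real.exp_pos (Φ R)
      have he1 := Real.exp_pos 1
      have e0 : (2 * δ / Real.exp 1) * Real.exp (Φ R)
          = δ * (2 * (Real.exp (Φ R) / Real.exp 1)) := by ring
      have h3 : (2 * δ / Real.exp 1) * Real.exp (Φ R) ≤ h R * Real.exp (Φ R) := by
        rw [e0]; exact hmain
      exact le_of_mul_le_mul_right h3 hepos
    -- conclude
    have h4 : 1 + A ≤ c₁ * R := by
      rw [hAdef, hc₁def]
      nlinarith [abs_nonneg ξ, abs_nonneg b, hR1]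
    have h5 : 1 / (c₁ * R) ≤ δ := by
      rw [hδdef]
      exact one_div_le_one_div_of_le (by linarith) h4
    calc (2 / Real.exp 1 / c₁) * R⁻¹ = (2 / Real.exp 1) * (1 / (c₁ * R)) := by
          rw [one_div, mul_inv]; ring
      _ ≤ (2 / Real.exp 1) * δ := mul_le_mul_of_nonneg_left h5 (by positivity)
      _ = 2 * δ / Real.exp 1 := by ring
      _ ≤ h R := hhR
  -- final contradiction
  have hInt_h : Integrable h muHalf := by
    have heqh : (fun x => ‖u x‖ ^ 2) = h := funext fun x => (hh_eq x).symm
    rwa [heqh] at hInt_u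
  have hInt_h' : IntegrableOn h (Ioi (0:ℝ)) volume := hInt_h
  have hIntTail : IntegrableOn h (Ioi (R₀ + 1)) volume :=
    hInt_h'.mono_set (Ioi_subset_Ioi (by linarith))
  have hq : IntegrableOn (fun x : ℝ => (2 / Real.exp 1 / c₁) * x⁻¹) (Ioi (R₀ + 1)) volume := by
    apply Integrable.mono hIntTail
    · exact (measurable_inv.const_mul _).aestronglyMeasurable
    · rw [ae_restrict_iff' measurableSet_Ioi]
      filter_upwards with x hx
      have hx0 : (0:ℝ) < x := by
        have := hx.out; linarith
      have hqx : 0 ≤ (2 / Real.exp 1 / c₁) * x⁻¹ := by positivity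
      rw [Real.norm_of_nonneg hqx, Real.norm_of_nonneg (hh_nonneg x)]
      exact key x hx.out.le
  have hq2 : IntegrableOn (fun x : ℝ => x ^ (-1:ℝ)) (Ioi (R₀ + 1)) volume := by
    have hcpos : (0:ℝ) < 2 / Real.exp 1 / c₁ := by positivity
    have h6 := hq.const_mul (2 / Real.exp 1 / c₁)⁻¹
    have heqf : (fun x : ℝ => (2 / Real.exp 1 / c₁)⁻¹ * ((2 / Real.exp 1 / c₁) * x⁻¹))
        = fun x : ℝ => x ^ (-1:ℝ) := by
      funext x
      rw [Real.rpow_neg_one, ← mul_assoc, inv_mul_cancel₀ hcpos.ne', one_mul]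
    rwa [heqf] at h6
  rw [integrableOn_Ioi_rpow_iff (by linarith : (0:ℝ) < R₀ + 1)] at hq2
  linarith

/-- Lemma 3.2: for `(b,γ) ∈ ℝ²`, `ξ ∈ ℝ` and `λ ≠ 0` with `γλ > 0`, the map
`𝒥 : ker(𝔥⁺_{γλ,ξ} - λ²) ∋ u ↦ (u, λ⁻¹ d_ξ† u) ∈ ker(𝒟_{γ,ξ} - λ)` is well defined and an
isomorphism: it maps the first kernel into the second, is (trivially) injective, and every
element of `ker(𝒟_{γ,ξ} - λ)` arises this way. -/
theorem kernel_isomorphism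
    (b γ ξ lam : ℝ) (hlam : lam ≠ 0) (hgl : 0 < γ * lam) :
    (∀ u : ℝ → ℂ, IsRobinSolP b ξ (γ * lam) (lam ^ 2) u →
      IsFiberEigenfun b (some γ) ξ lam u (fun x => (lam : ℂ)⁻¹ * dOpDag b ξ u x)) ∧
    (∀ u₁ u₂ : ℝ → ℂ, IsFiberEigenfun b (some γ) ξ lam u₁ u₂ →
      IsRobinSolP b ξ (γ * lam) (lam ^ 2) u₁ ∧
        ∀ x ∈ Ici (0 : ℝ), u₂ x = (lam : ℂ)⁻¹ * dOpDag b ξ u₁ x) := by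
  have hlamC : (lam : ℂ) ≠ 0 := Complex.ofReal_ne_zero.mpr hlam
  constructor
  · -- forward direction
    intro u hu
    have hsm := hu.smooth
    have hv : ContDiff ℝ (⊤ : ℕ∞) (dOpDag b ξ u) := smooth_dOpDag hsm
    refine { smooth₁ := hsm
             smooth₂ := contDiff_const.mul hv
             memL2₁ := hu.memL2
             memL2₂ := (key_memL2 b ξ lam u hsm hu.memL2 hu.eq).const_mul _
             eq₁ := fun x _ => by rw [← mul_assoc, mul_inv_cancel₀ hlamC, one_mul]
             eq₂ := ?_
             bc := ?_ }
    · intro x hx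
      have hdiff : DifferentiableAt ℝ (dOpDag b ξ u) x := (hv.differentiable (by simp)) x
      have hder : deriv (fun y => (lam : ℂ)⁻¹ * dOpDag b ξ u y) x
          = (lam : ℂ)⁻¹ * deriv (dOpDag b ξ u) x := deriv_const_mul _ hdiff
      have h0 := hu.eq x hx
      rw [dOp] at h0 ⊢
      rw [hder]
      push_cast at h0 ⊢
      field_simp
      linear_combination h0
    · show (lam : ℂ)⁻¹ * dOpDag b ξ u 0 = (γ : ℂ) * u 0
      rw [hu.bc]
      push_cast
      field_simp
  · -- backward direction
    intro u₁ u₂ hef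
    have hEq : ∀ x ∈ Ici (0:ℝ), dOpDag b ξ u₁ x = (lam : ℂ) * u₂ x := hef.eq₁
    have hsm1 := hef.smooth₁
    have hf : ContDiff ℝ (⊤ : ℕ∞) (dOpDag b ξ u₁) := smooth_dOpDag hsm1
    have hG : ContDiff ℝ (⊤ : ℕ∞) (fun x => (lam : ℂ) * u₂ x) := contDiff_const.mul hef.smooth₂
    have hd : ∀ x ∈ Ici (0:ℝ), deriv (dOpDag b ξ u₁) x = (lam : ℂ) * deriv u₂ x := by
      have h1 : EqOn (deriv (dOpDag b ξ u₁)) (deriv (fun x => (lam : ℂ) * u₂ x)) (Ioi 0) := by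
        intro x hx
        apply Filter.EventuallyEq.deriv_eq
        exact Filter.eventuallyEq_of_mem
          (mem_of_superset (isOpen_Ioi.mem_nhds hx) Ioi_subset_Ici_self)
          (fun y hy => hEq y hy)
      have h2 : EqOn (deriv (dOpDag b ξ u₁)) (deriv (fun x => (lam : ℂ) * u₂ x)) (Ici 0) := by
        rw [← closure_Ioi (0:ℝ)]
        exact h1.closure (smooth_deriv hf).continuous (smooth_deriv hG).continuous
      intro x hx
      rw [h2 hx, deriv_const_mul _ ((hef.smooth₂.differentiable (by simp)) x)]
    constructor
    · refine { smooth := hsm1, memL2 := hef.memL2₁, eq := ?_, bc := ?_ }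
      · intro x hx
        have h2 := hef.eq₂ x hx
        rw [dOp] at h2 ⊢
        rw [hd x hx, hEq x hx]
        push_cast
        linear_combination (lam : ℂ) * h2
      · have h0 := hEq 0 self_mem_Ici
        have hbc : u₂ 0 = (γ : ℂ) * u₁ 0 := hef.bc
        rw [h0, hbc]
        push_cast
        ring
    · intro x hx
      rw [hEq x hx, ← mul_assoc, inv_mul_cancel₀ hlamC, one_mul]

end
end
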